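/- arXiv:2502.13537 — 2 statements merged into one kernel-verified Lean document; each statement's English description precedes it below -/
import Mathlib

section
/- Under the same assumptions, |H⁻¹(p) − F⁻¹(p)| ≤ H⁻¹(p + ε) − H⁻¹(p − ε). -/
open Set

/-- STATEMENT 0: If `F` and `H` are monotone CDF-like functions (strictly increasing
continuous bijections from open intervals `A`, `B` onto `(0,1)`, extended by `0`/`1`
outside), `sup_y |F y - H y| ≤ ε` and `0 < p - ε`, `p + ε < 1`, then
`Hinv (p - ε) ≤ Finv p ≤ Hinv (p + ε)`. -/
theorem stmt1 (F H Finv Hinv : ℝ → ℝ) (A B : Set ℝ)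
    (hAopen : IsOpen A) (hAconn : A.OrdConnected)
    (hBopen : IsOpen B) (hBconn : B.OrdConnected)
    (hFmono : Monotone F) (hHmono : Monotone H)
    (hFstrict : StrictMonoOn F A) (hHstrict : StrictMonoOn H B)
    (hFcont : Continuous F) (hHcont : Continuous H)
    (hFbij : Set.BijOn F A (Set.Ioo 0 1)) (hHbij : Set.BijOn H B (Set.Ioo 0 1))
    (hFinv : ∀ p ∈ Set.Ioo (0:ℝ) 1, Finv p ∈ A ∧ F (Finv p) = p)
    (hHinv : ∀ p ∈ Set.Ioo (0:ℝ) 1, Hinv p ∈ B ∧ H (Hinv p) = p)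
    (hFext : ∀ x ∉ A, F x = 0 ∨ F x = 1)
    (hHext : ∀ x ∉ B, H x = 0 ∨ H x = 1)
    (ε p : ℝ) (hε : 0 < ε) (hp : p ∈ Set.Ioo (0:ℝ) 1)
    (hpe1 : 0 < p - ε) (hpe2 : p + ε < 1)
    (hsup : ∀ y : ℝ, |F y - H y| ≤ ε) :
    |Hinv p - Finv p| ≤ Hinv (p + ε) - Hinv (p - ε) := by
  obtain ⟨hpA, hFp⟩ := hFinv p hp
  obtain ⟨hpB, hHp⟩ := hHinv p hp
  have hme : (p - ε) ∈ Set.Ioo (0:ℝ) 1 := ⟨hpe1, by linarith [hp.2]⟩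
  have hpe : (p + ε) ∈ Set.Ioo (0:ℝ) 1 := ⟨by linarith [hp.1], hpe2⟩
  obtain ⟨hmB, hHm⟩ := hHinv _ hme
  obtain ⟨hpeB, hHpe⟩ := hHinv _ hpe
  set x := Finv p with hx
  have hsx := hsup x
  rw [abs_le] at hsx
  have hHx1 : p - ε ≤ H x := by linarith [hFp ▸ hsx.2]
  have hHx2 : H x ≤ p + ε := by linarith [hFp ▸ hsx.1]
  have hxB : x ∈ B := by
    by_contra hxB
    rcases hHext x hxB with h | h <;> rw [h] at hHx1 hHx2 <;> linarith
  have h1 : Hinv (p - ε) ≤ x := by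
    by_contra h
    push_neg at h
    have := hHstrict hxB hmB h
    rw [hHm] at this
    linarith
  have h2 : x ≤ Hinv (p + ε) := by
    by_contra h
    push_neg at h
    have := hHstrict hpeB hxB h
    rw [hHpe] at this
    linarith
  have h3 : Hinv (p - ε) ≤ Hinv p := by
    by_contra h
    push_neg at h
    have := hHstrict hpB hmB h
    rw [hHm, hHp] at this
    linarith
  have h4 : Hinv p ≤ Hinv (p + ε) := by
    by_contra h
    push_neg at h
    have := hHstrict hpeB hpB h
    rw [hHpe, hHp] at this
    linarith
  rw [abs_le]
  constructor <;> linarith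
end

section
/- Let f be a density supported on (α,β) and (a,b) ⊆ (α,β) a bounded interval. For k ≥ 0 define a_k := (2/(b−a)) ∫_a^b f(x) cos(kπ(x−a)/(b−a)) dx and c_k := (2/(b−a)) Re{φ(kπ/(b−a)) exp(−i·k·aπ/(b−a))}, where φ(u) = ∫ e^{iux} f(x) dx is the characteristic function. Then c_k = (2/(b−a)) ∫_α^β f(x) cos(kπ(x−a)/(b−a)) dx, and hence |a_k − c_k| ≤ (2/(b−a)) ∫_{(α,β)\setminus(a,b)} f(x) dx. -/
open Set MeasureTheory Real

/-- the COS coefficients. `f` is a density positive exactly on the open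
interval `A ⊇ (a,b)` with characteristic function `φ`. Then the COS coefficient `c_k`
equals `(2/(b-a)) ∫_A f(x) cos(kπ(x-a)/(b-a)) dx`, and
`|a_k - c_k| ≤ (2/(b-a)) ∫_{A \ (a,b)} f`. -/
theorem stmt5 (f : ℝ → ℝ) (A : Set ℝ) (hAopen : IsOpen A) (hAconn : A.OrdConnected)
    (hf0 : ∀ x, 0 ≤ f x) (hfpos : ∀ x, 0 < f x ↔ x ∈ A)
    (hfint : Integrable f) (hf1 : ∫ x, f x = 1)
    (a b : ℝ) (hab : a < b) (hsub : Set.Ioo a b ⊆ A)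
    (φ : ℝ → ℂ) (hφ : ∀ u : ℝ, φ u = ∫ x : ℝ, Complex.exp (u * x * Complex.I) * f x)
    (k : ℕ) (ak ck : ℝ)
    (hak : ak = 2 / (b - a) * ∫ x in a..b, f x * Real.cos (k * π * (x - a) / (b - a)))
    (hck : ck = 2 / (b - a) *
      (φ (k * π / (b - a)) * Complex.exp (-(k * a * π / (b - a)) * Complex.I)).re) :
    ck = 2 / (b - a) * ∫ x in A, f x * Real.cos (k * π * (x - a) / (b - a)) ∧
      |ak - ck| ≤ 2 / (b - a) * ∫ x in A \ Set.Ioo a b, f x := by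
  set u : ℝ := k * π / (b - a) with hu
  set T : ℝ → ℝ := fun x => f x * Real.cos (k * π * (x - a) / (b - a)) with hT
  have hba : (0:ℝ) < b - a := sub_pos.2 hab
  have harg : ∀ x : ℝ, k * π * (x - a) / (b - a) = u * (x - a) := fun x => by
    rw [hu]; ring
  -- integrability of the complex integrand
  have hg : Integrable (fun x => Complex.exp ((u * (x - a) : ℝ) * Complex.I) * (f x : ℂ)) := by
    apply Integrable.mono' hfint.abs
    · exact ((Complex.continuous_exp.comp ((Complex.continuous_ofReal.comp
        (by continuity)).mul continuous_const)).aestronglyMeasurable).mul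
        (Complex.continuous_ofReal.comp_aestronglyMeasurable hfint.aestronglyMeasurable)
    · filter_upwards with x
      rw [norm_mul, Complex.norm_exp_ofReal_mul_I, one_mul,
        Complex.norm_real, Real.norm_eq_abs]
  have hTint : Integrable T := by
    apply Integrable.mono' hfint.abs
    · exact hfint.aestronglyMeasurable.mul (Real.continuous_cos.comp
        (by continuity)).aestronglyMeasurable
    · filter_upwards with x
      rw [hT]
      simp only [norm_mul, Real.norm_eq_abs]
      calc |f x| * |Real.cos (k * π * (x - a) / (b - a))| ≤ |f x| * 1 :=
            mul_le_mul_of_nonneg_left (Real.abs_cos_le_one _) (abs_nonneg _)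
        _ = |f x| := mul_one _
  -- ck equals full-line integral of T
  have hckT : ck = 2 / (b - a) * ∫ x, T x := by
    rw [hck, hφ]
    congr 1
    have h1 : (∫ x : ℝ, Complex.exp (u * x * Complex.I) * f x) *
        Complex.exp (-(k * a * π / (b - a)) * Complex.I)
        = ∫ x : ℝ, Complex.exp ((u * (x - a) : ℝ) * Complex.I) * (f x : ℂ) := by
      rw [← integral_mul_const]
      congr 1; ext x
      have : (-(k * a * π / (b - a)) : ℂ) = ((-(u * a) : ℝ) : ℂ) := by
        push_cast [hu]; ring
      rw [this, mul_right_comm, ← Complex.exp_add]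
      congr 2
      push_cast
      ring
    have h2 := integral_re hg
    simp only [RCLike.re_to_complex] at h2
    rw [h1, ← h2]
    congr 1; ext x
    rw [hT]
    simp only [Complex.mul_re, Complex.ofReal_re, Complex.ofReal_im,
      Complex.exp_ofReal_mul_I_re, mul_zero, sub_zero, harg x]
    exact mul_comm _ _
  have hzero : ∀ x ∉ A, T x = 0 := by
    intro x hx
    have : f x = 0 := le_antisymm (not_lt.1 (fun h => hx ((hfpos x).1 h))) (hf0 x)
    simp [hT, this]
  have hA : (∫ x in A, T x) = ∫ x, T x :=
    setIntegral_eq_integral_of_forall_compl_eq_zero hzero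
  have part1 : ck = 2 / (b - a) * ∫ x in A, T x := by rw [hckT, hA]
  refine ⟨part1, ?_⟩
  -- second part
  have hak' : ak = 2 / (b - a) * ∫ x in Set.Ioo a b, T x := by
    rw [hak, intervalIntegral.integral_of_le hab.le,
      MeasureTheory.integral_Ioc_eq_integral_Ioo]
  have hdiff : (∫ x in A \ Set.Ioo a b, T x) = (∫ x in A, T x) - ∫ x in Set.Ioo a b, T x :=
    integral_diff measurableSet_Ioo hTint.integrableOn hsub
  have hms : MeasurableSet (A \ Set.Ioo a b) := hAopen.measurableSet.diff measurableSet_Ioo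
  have key : |ak - ck| = 2 / (b - a) * |∫ x in A \ Set.Ioo a b, T x| := by
    rw [hak', part1, hdiff, ← mul_sub, abs_mul, abs_of_pos (by positivity : (0:ℝ) < 2 / (b - a))]
    congr 1
    rw [abs_sub_comm]
  rw [key]
  apply mul_le_mul_of_nonneg_left _ (by positivity : (0:ℝ) ≤ 2 / (b - a))
  calc |∫ x in A \ Set.Ioo a b, T x| = ‖∫ x in A \ Set.Ioo a b, T x‖ :=
        (Real.norm_eq_abs _).symm
    _ ≤ ∫ x in A \ Set.Ioo a b, ‖T x‖ := norm_integral_le_integral_norm _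
    _ = ∫ x in A \ Set.Ioo a b, |T x| := by simp [Real.norm_eq_abs]
    _ ≤ ∫ x in A \ Set.Ioo a b, f x := by
        apply setIntegral_mono_on hTint.abs.integrableOn hfint.integrableOn hms
        intro x _
        rw [hT]
        simp only [abs_mul]
        calc |f x| * |Real.cos (k * π * (x - a) / (b - a))| ≤ |f x| * 1 :=
              mul_le_mul_of_nonneg_left (Real.abs_cos_le_one _) (abs_nonneg _)
          _ = f x := by rw [mul_one, abs_of_nonneg (hf0 x)]
end
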